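/- arXiv:1910.01594 — 3 statements merged into one kernel-verified Lean document; each statement's English description precedes it below -/
import Mathlib

section
/- Let (a_k)_{k≥0} be a sequence of nonnegative real numbers satisfying a_{k+1} ≤ a_k^2 + b for all k ≥ 0, where 0 ≤ a_0 < 1/2 and 0 < b < 1/4. Then for every k ≥ 0, a_k ≤ a_0^{2^k} + (2 + 1/(1 − 2 a_0)) · b. -/
/-!
If `2 b ≤ a₀`, then `a₀` is a supersolution (`a₀² + b ≤ a₀`), so `a_k ≤ a₀` for all `k`.
Comparing with `p_k = a₀ ^ 2 ^ k`, which satisfies `p_{k+1} = p_k²`, the excess `a_k - p_k`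
is then multiplied by at most `a_k + p_k ≤ 2 a₀ < 1` at each step, up to the additive error `b`;
this keeps it below the fixed point `b / (1 - 2 a₀)` of `c ↦ 2 a₀ c + b`.
If instead `a₀ < 2 b`, then `2 b` is a supersolution because `b < 1/4`, and `a_k ≤ 2 b` for all `k`.
-/

lemma le_of_sq_add_le {a : ℕ → ℝ} {b m : ℝ} (ha : ∀ k, 0 ≤ a k)
    (hrec : ∀ k, a (k + 1) ≤ a k ^ 2 + b) (hm : m ^ 2 + b ≤ m) (h0 : a 0 ≤ m) :
    ∀ k, a k ≤ m := by
  intro k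
  induction k with
  | zero => exact h0
  | succ k ih =>
    calc a (k + 1) ≤ a k ^ 2 + b := hrec k
      _ ≤ m ^ 2 + b := by gcongr; exact ha k
      _ ≤ m := hm

lemma sq_le_sq_add_of_le_add {x y c r : ℝ} (hx : 0 ≤ x) (hy : 0 ≤ y) (hc : 0 ≤ c) (hxr : x ≤ r)
    (hyr : y ≤ r) (hxy : x ≤ y + c) : x ^ 2 ≤ y ^ 2 + 2 * r * c := by
  rcases le_total x y with hle | hge
  · nlinarith
  · nlinarith

lemma le_pow_two_pow_add_div {a : ℕ → ℝ} {b : ℝ} (ha : ∀ k, 0 ≤ a k)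
    (hrec : ∀ k, a (k + 1) ≤ a k ^ 2 + b) (hb : 0 ≤ b) (ha0 : a 0 < 1 / 2)
    (hbound : ∀ k, a k ≤ a 0) :
    ∀ k, a k ≤ a 0 ^ 2 ^ k + b / (1 - 2 * a 0) := by
  have hs : 0 < 1 - 2 * a 0 := by linarith
  set c := b / (1 - 2 * a 0) with hc
  have hc0 : 0 ≤ c := div_nonneg hb hs.le
  have hfix : 2 * a 0 * c + b = c := by rw [hc]; field_simp; ring
  intro k
  induction k with
  | zero => simpa using hc0
  | succ k ih =>
    have hp0 : 0 ≤ a 0 ^ 2 ^ k := pow_nonneg (ha 0) _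
    have hp : a 0 ^ 2 ^ k ≤ a 0 :=
      pow_le_of_le_one (ha 0) (by linarith) (Nat.two_pow_pos k).ne'
    calc a (k + 1) ≤ a k ^ 2 + b := hrec k
      _ ≤ (a 0 ^ 2 ^ k) ^ 2 + 2 * a 0 * c + b := by
        gcongr; exact sq_le_sq_add_of_le_add (ha k) hp0 hc0 (hbound k) hp ih
      _ = a 0 ^ 2 ^ (k + 1) + c := by rw [← pow_mul, ← pow_succ, add_assoc, hfix]

theorem b_sequence_lemma (a : ℕ → ℝ) (b : ℝ)
    (ha : ∀ k, 0 ≤ a k)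
    (hrec : ∀ k, a (k + 1) ≤ (a k) ^ 2 + b)
    (ha0 : a 0 < 1 / 2) (hb0 : 0 < b) (hb1 : b < 1 / 4) :
    ∀ k, a k ≤ (a 0) ^ (2 ^ k) + (2 + 1 / (1 - 2 * a 0)) * b := by
  intro k
  have hp0 : 0 ≤ a 0 ^ 2 ^ k := pow_nonneg (ha 0) _
  have hs : 0 < 1 - 2 * a 0 := by linarith
  rcases le_total (a 0) (2 * b) with hsmall | hlarge
  · have hk : a k ≤ 2 * b :=
      le_of_sq_add_le ha hrec (by nlinarith) hsmall k
    have : 0 ≤ 1 / (1 - 2 * a 0) * b := by positivity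
    linarith
  · have hbound : ∀ n, a n ≤ a 0 :=
      le_of_sq_add_le ha hrec (by nlinarith [ha 0]) le_rfl
    have hk := le_pow_two_pow_add_div ha hrec hb0.le ha0 hbound k
    rw [← one_div_mul_eq_div] at hk
    linarith
end

section
/- Let b be a real number with 0 < b < 1/4 and set α0 = 2b/(1 + √(1 − 4b)). Let (A_k)_{k≥0} satisfy A_{k+1} = A_k^2 + b with α0 ≤ A_0 < 1/2, and write a_0 = A_0. Then for every k ≥ 0, A_k ≤ a_0^{2^k} + ((1 − (2 a_0)^k)/(1 − 2 a_0))·b. -/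
/-!
Write `a = A 0`. Since `a` lies between the fixed points `α₀ = (1 - √(1 - 4b))/2` and
`α₁ = (1 + √(1 - 4b))/2` of `x ↦ x² + b`, we have `a² + b ≤ a`, so the interval `[0, a]` is
invariant and `A k ≤ a` throughout. Writing `A k ≤ x + y` with `x = a ^ 2 ^ k` and
`y = (∑ i < k, (2a) ^ i) b`, squaring gives `A k ^ 2 ≤ x² + 2ay`: either `A k ≤ x`, or
`A k - x ≤ y` and `A k + x ≤ 2a`. This is exactly the recursion of the claimed bound.
-/

open Finset

theorem two_mul_div_one_add_sqrt_eq {b : ℝ} (hb : b ≤ 1 / 4) :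
    2 * b / (1 + √(1 - 4 * b)) = (1 - √(1 - 4 * b)) / 2 := by
  have hs : √(1 - 4 * b) ^ 2 = 1 - 4 * b := Real.sq_sqrt (by linarith)
  have hpos : 0 < 1 + √(1 - 4 * b) := by positivity
  rw [div_eq_div_iff hpos.ne' two_ne_zero]
  nlinarith

theorem sq_add_le_self_of_mem_Icc {a b : ℝ}
    (h0 : (1 - √(1 - 4 * b)) / 2 ≤ a) (h1 : a ≤ (1 + √(1 - 4 * b)) / 2) (hb : b ≤ 1 / 4) :
    a ^ 2 + b ≤ a := by
  have hs : √(1 - 4 * b) ^ 2 = 1 - 4 * b := Real.sq_sqrt (by linarith)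
  nlinarith [mul_nonneg (sub_nonneg.2 h0) (sub_nonneg.2 h1)]

theorem sq_le_sq_add_two_mul {m x y a : ℝ} (hm : 0 ≤ m) (hma : m ≤ a) (hxa : x ≤ a)
    (hmxy : m ≤ x + y) (hy : 0 ≤ y) : m ^ 2 ≤ x ^ 2 + 2 * a * y := by
  rcases le_or_gt m x with hmx | hxm
  · nlinarith
  · nlinarith [mul_le_mul_of_nonneg_left (sub_le_iff_le_add'.2 hmxy) hy]

theorem one_sub_pow_div_one_sub_eq_geom_sum {x : ℝ} (hx : x ≠ 1) (k : ℕ) :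
    (1 - x ^ k) / (1 - x) = ∑ i ∈ range k, x ^ i := by
  rw [geom_sum_eq hx, ← neg_div_neg_eq, neg_sub, neg_sub]

section QuadraticRecursion

variable {b : ℝ} {A : ℕ → ℝ}

theorem mem_Icc_of_sq_add_le_self (hb : 0 ≤ b) (hrec : ∀ k, A (k + 1) = A k ^ 2 + b)
    (hA0 : 0 ≤ A 0) (hfix : A 0 ^ 2 + b ≤ A 0) (k : ℕ) : A k ∈ Set.Icc 0 (A 0) := by
  induction k with
  | zero => exact ⟨hA0, le_rfl⟩
  | succ k ih =>
    rw [hrec]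
    have hsq : A k ^ 2 ≤ A 0 ^ 2 := pow_le_pow_left₀ ih.1 ih.2 2
    exact ⟨by positivity, by linarith⟩

theorem le_pow_two_pow_add_geom_sum_mul (hb : 0 ≤ b) (hrec : ∀ k, A (k + 1) = A k ^ 2 + b)
    (hA0 : 0 ≤ A 0) (hfix : A 0 ^ 2 + b ≤ A 0) (k : ℕ) :
    A k ≤ A 0 ^ 2 ^ k + (∑ i ∈ range k, (2 * A 0) ^ i) * b := by
  have hA0_le_one : A 0 ≤ 1 := by nlinarith
  induction k with
  | zero => simp
  | succ k ih =>
    obtain ⟨hAk0, hAka⟩ := mem_Icc_of_sq_add_le_self hb hrec hA0 hfix k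
    have hpow : A 0 ^ 2 ^ k ≤ A 0 := pow_le_of_le_one hA0 hA0_le_one (by positivity)
    have hsum : 0 ≤ (∑ i ∈ range k, (2 * A 0) ^ i) * b := by positivity
    have hsq := sq_le_sq_add_two_mul hAk0 hAka hpow ih hsum
    rw [hrec, geom_sum_succ, pow_succ 2 k, pow_mul]
    linarith

end QuadraticRecursion

theorem quadratic_seq_estimate (b : ℝ) (hb0 : 0 < b) (hb1 : b < 1 / 4)
    (A : ℕ → ℝ) (hrec : ∀ k, A (k + 1) = (A k) ^ 2 + b)
    (h0 : 2 * b / (1 + Real.sqrt (1 - 4 * b)) ≤ A 0) (h1 : A 0 < 1 / 2) :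
    ∀ k, A k ≤ (A 0) ^ (2 ^ k) + ((1 - (2 * A 0) ^ k) / (1 - 2 * A 0)) * b := by
  intro k
  have hA0 : 0 ≤ A 0 := le_trans (by positivity) h0
  rw [two_mul_div_one_add_sqrt_eq hb1.le] at h0
  have hfix : A 0 ^ 2 + b ≤ A 0 :=
    sq_add_le_self_of_mem_Icc h0 (by linarith [Real.sqrt_nonneg (1 - 4 * b)]) hb1.le
  rw [one_sub_pow_div_one_sub_eq_geom_sum (by linarith)]
  exact le_pow_two_pow_add_geom_sum_mul hb0.le hrec hA0 hfix k
end

section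
/- Let (e_k)_{k≥0} be a sequence of nonnegative real numbers and let c4 > 0, c5 > 0, h > 0 be such that c4·e_{k+1} ≤ c5·h^2 + (c4·e_k)^2 for all k ≥ 0. If c4·e_0 < 1/2 and c5·h^2 < 1/4, then for every k ≥ 0, c4·e_k ≤ (c4·e_0)^{2^k} + c5·(3 + (2·c4·e_0)/(1 − 2·c4·e_0))·h^2. -/
/-!
Write `a_k = c4 e_k` and `b = c5 h²`, so that `a_{k+1} ≤ b + a_k²`. If `b + m² ≤ m` and
`0 ≤ a_0 ≤ m`, the recursion keeps `a_k ≤ m`; with `m = max a_0 (2b)` this holds because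
`a_0 < 1/2` and `b < 1/4`. When `a_0 ≤ 2b` this already gives `a_k ≤ 2b`. Otherwise `a_k ≤ a_0`,
and `a_{k+1} - a_0^{2^{k+1}} ≤ b + (a_k - a_0^{2^k})(a_k + a_0^{2^k})` shows that the excess
over `a_0^{2^k}` stays below the fixed point `b / (1 - 2a_0)` of `d ↦ b + 2a_0 d`.
-/

namespace AddSqRecurrence

variable {a : ℕ → ℝ} {b : ℝ}

theorem le_of_add_sq_le (ha : ∀ k, 0 ≤ a k) (hrec : ∀ k, a (k + 1) ≤ b + a k ^ 2)
    {m : ℝ} (h0 : a 0 ≤ m) (hm : b + m ^ 2 ≤ m) : ∀ k, a k ≤ m := by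
  intro k
  induction k with
  | zero => exact h0
  | succ k ih =>
    have hsq : a k ^ 2 ≤ m ^ 2 := pow_le_pow_left₀ (ha k) ih 2
    linarith [hrec k]

theorem le_pow_add_div (ha : ∀ k, 0 ≤ a k) (hrec : ∀ k, a (k + 1) ≤ b + a k ^ 2)
    (hb : 0 ≤ b) (h0 : a 0 < 1 / 2) (hle : ∀ k, a k ≤ a 0) :
    ∀ k, a k ≤ a 0 ^ 2 ^ k + b / (1 - 2 * a 0) := by
  set D := b / (1 - 2 * a 0)
  have hden : 0 < 1 - 2 * a 0 := by linarith
  have hD : 0 ≤ D := div_nonneg hb hden.le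
  have hfix : b + 2 * a 0 * D = D := by
    simp only [D]
    field_simp
    ring
  intro k
  induction k with
  | zero => simp only [pow_zero, pow_one]; linarith
  | succ k ih =>
    set p := a 0 ^ 2 ^ k
    have hp : 0 ≤ p := pow_nonneg (ha 0) _
    have hp_le : p ≤ a 0 := pow_le_of_le_one (ha 0) (by linarith) (by positivity)
    have hsq : a k ^ 2 - p ^ 2 ≤ 2 * a 0 * D := by
      nlinarith [mul_nonneg (sub_nonneg.2 ih) (add_nonneg (ha k) hp),
        mul_nonneg (sub_nonneg.2 (hle k)) hD, mul_nonneg (sub_nonneg.2 hp_le) hD]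
    have hpow : a 0 ^ 2 ^ (k + 1) = p ^ 2 := by rw [pow_succ, pow_mul]
    linarith [hrec k]

theorem le_pow_add (ha : ∀ k, 0 ≤ a k) (hrec : ∀ k, a (k + 1) ≤ b + a k ^ 2)
    (hb0 : 0 ≤ b) (hb : b ≤ 1 / 4) (h0 : a 0 < 1 / 2) :
    ∀ k, a k ≤ a 0 ^ 2 ^ k + 2 * b + b / (1 - 2 * a 0) := by
  intro k
  have hp : 0 ≤ a 0 ^ 2 ^ k := pow_nonneg (ha 0) _
  have hD : 0 ≤ b / (1 - 2 * a 0) := div_nonneg hb0 (by linarith)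
  rcases le_or_gt (a 0) (2 * b) with hsmall | hlarge
  · have hle := le_of_add_sq_le ha hrec hsmall (by nlinarith) k
    linarith
  · have hle := le_of_add_sq_le ha hrec le_rfl (by nlinarith)
    linarith [le_pow_add_div ha hrec hb0 h0 hle k]

end AddSqRecurrence

theorem eigenvalue_final_estimate_general (e : ℕ → ℝ) (c4 c5 h : ℝ)
    (he : ∀ k, 0 ≤ e k) (hc4 : 0 < c4) (hc5 : 0 < c5)
    (hrec : ∀ k, c4 * e (k + 1) ≤ c5 * h ^ 2 + (c4 * e k) ^ 2)
    (h0 : c4 * e 0 < 1 / 2) (hb : c5 * h ^ 2 < 1 / 4) :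
    ∀ k, c4 * e k ≤ (c4 * e 0) ^ (2 ^ k) +
      c5 * (3 + (2 * c4 * e 0) / (1 - 2 * c4 * e 0)) * h ^ 2 := by
  intro k
  have hbound := AddSqRecurrence.le_pow_add (a := fun k => c4 * e k)
    (fun k => mul_nonneg hc4.le (he k)) hrec (by positivity) hb.le h0 k
  have hden : 1 - 2 * c4 * e 0 ≠ 0 := by linarith
  have hconst : 2 * (c5 * h ^ 2) + c5 * h ^ 2 / (1 - 2 * (c4 * e 0)) =
      c5 * (3 + (2 * c4 * e 0) / (1 - 2 * c4 * e 0)) * h ^ 2 := by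
    rw [← mul_assoc]
    field_simp
    ring
  linarith

theorem eigenvalue_final_estimate (e : ℕ → ℝ) (c4 c5 h : ℝ)
    (he : ∀ k, 0 ≤ e k) (hc4 : 0 < c4) (hc5 : 0 < c5) (hh : 0 < h)
    (hrec : ∀ k, c4 * e (k + 1) ≤ c5 * h ^ 2 + (c4 * e k) ^ 2)
    (h0 : c4 * e 0 < 1 / 2) (hb : c5 * h ^ 2 < 1 / 4) :
    ∀ k, c4 * e k ≤ (c4 * e 0) ^ (2 ^ k) +
      c5 * (3 + (2 * c4 * e 0) / (1 - 2 * c4 * e 0)) * h ^ 2 :=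
  eigenvalue_final_estimate_general e c4 c5 h he hc4 hc5 hrec h0 hb
end
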